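/- Let μ be a finite measure, H a real Hilbert space, T : H → L²(μ) a compact continuous linear map, Y a real normed vector space, F : L¹(μ) → Y continuous, and R : L¹(μ) → [0, ∞] sequentially lower semicontinuous with respect to L¹ convergence. Fix ε > 0, α > 0, β > 0, y^δ ∈ Y and φ₀ ∈ H. Then the functional G_{ε,α}(φ) := ‖F(P_ε ∘ (Tφ)) − y^δ‖²_Y + 2βα·R(P_ε ∘ (Tφ)) + α‖φ − φ₀‖²_H attains a global minimizer on H. -/

import Mathlib

open MeasureTheory Filter Topology

noncomputable section

/-- The smoothed level set projection `P_ε`. -/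
def Pe (ε t : ℝ) : ℝ := max 0 (min 1 (1 + t / ε))

/-- The level set projection `P` (Heaviside function, `P t = 1` iff `0 ≤ t`). -/
def Pstep (t : ℝ) : ℝ := if 0 ≤ t then 1 else 0

lemma Pe_continuous (ε : ℝ) : Continuous (Pe ε) :=
  continuous_const.max (continuous_const.min (continuous_const.add (continuous_id.div_const ε)))

lemma Pe_bound (ε t : ℝ) : ‖Pe ε t‖ ≤ 1 := by
  unfold Pe
  rw [Real.norm_eq_abs, abs_le]
  refine ⟨by linarith [le_max_left (0:ℝ) (min 1 (1 + t / ε))], ?_⟩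
  exact max_le (by norm_num) (min_le_left _ _)

lemma Pstep_measurable : Measurable Pstep :=
  Measurable.ite measurableSet_Ici measurable_const measurable_const

lemma Pstep_bound (t : ℝ) : ‖Pstep t‖ ≤ 1 := by
  unfold Pstep; split <;> simp

variable {X : Type*} [MeasurableSpace X] (μ : Measure X) [IsFiniteMeasure μ]

/-- Composition `P_ε ∘ f` of the smoothed projection with an `L²` function, as an
element of `L¹` (the measure being finite). -/
def compPe (ε : ℝ) (f : Lp ℝ 2 μ) : Lp ℝ 1 μ :=
  (MemLp.of_bound ((Pe_continuous ε).comp_aestronglyMeasurable (Lp.aestronglyMeasurable f)) 1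
    (Eventually.of_forall fun x => Pe_bound ε (f x))).toLp _

/-- Composition `P ∘ f` of the discontinuous projection with an `L²` function, as an
element of `L¹`. -/
def compP (f : Lp ℝ 2 μ) : Lp ℝ 1 μ :=
  (MemLp.of_bound
    (Pstep_measurable.comp_aemeasurable (Lp.aestronglyMeasurable f).aemeasurable).aestronglyMeasurable 1
    (Eventually.of_forall fun x => Pstep_bound (f x))).toLp _

/-- A pair `(z, φ) ∈ L¹ × L²` is admissible if `z` is the `L¹` limit of `P_{ε_k} ∘ φ_k`
for some positive `ε_k → 0` and some `φ_k → φ` in `L²`. -/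
def Admissible (z : Lp ℝ 1 μ) (φ : Lp ℝ 2 μ) : Prop :=
  ∃ (εs : ℕ → ℝ) (φs : ℕ → Lp ℝ 2 μ),
    (∀ k, 0 < εs k) ∧ Tendsto εs atTop (𝓝 0) ∧
    Tendsto φs atTop (𝓝 φ) ∧
    Tendsto (fun k => compPe μ (εs k) (φs k)) atTop (𝓝 z)


open Metric
open scoped NNReal ENNReal

/-! The direct method. The term `α‖φ - φ₀‖²` bounds a minimizing sequence, and compactness of
`T` gives a subsequence with `T φₖ → g` in `L²` and `‖φₖ - φ₀‖ → c`. In place of weak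
compactness, a point `φ` with `T φ = g` and `‖φ - φ₀‖ ≤ c` is found in the intersection of the
nested closed convex sets `{φ | ‖T φ - g‖ ≤ δ, ‖φ - φ₀‖ ≤ c + δ}`: their minimal-norm points
form a Cauchy sequence, by the Pythagorean inequality for nearest points. Since `P_ε` is
Lipschitz, `g ↦ P_ε ∘ g` is continuous from `L²` to `L¹`, so the data and regularization terms
are sequentially lower semicontinuous along `T φₖ → g`. -/

lemma Pe_lipschitzWith (ε : ℝ) : LipschitzWith ‖ε⁻¹‖₊ (Pe ε) := by
  have clamp : LipschitzWith 1 fun s : ℝ => max 0 (min 1 s) :=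
    (LipschitzWith.id.const_min 1).const_max 0
  have affine : LipschitzWith ‖ε⁻¹‖₊ fun t : ℝ => 1 + t / ε :=
    LipschitzWith.of_dist_le_mul fun a b => by
      rw [Real.dist_eq, Real.dist_eq, coe_nnnorm, Real.norm_eq_abs, ← abs_mul]
      exact le_of_eq (congrArg _ (by ring))
  rw [← one_mul ‖ε⁻¹‖₊]
  exact clamp.comp affine

lemma coeFn_compPe (ε : ℝ) (f : Lp ℝ 2 μ) : compPe μ ε f =ᵐ[μ] fun x => Pe ε (f x) :=
  MemLp.coeFn_toLp _

lemma lipschitzWith_compPe (ε : ℝ) :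
    LipschitzWith (‖ε⁻¹‖₊ * (μ Set.univ ^ (2⁻¹ : ℝ)).toNNReal) (compPe μ ε) := by
  intro f g
  have hPe : ∀ᵐ x ∂μ,
      ‖(⇑(compPe μ ε f) - ⇑(compPe μ ε g)) x‖₊ ≤ ‖ε⁻¹‖₊ * ‖(⇑f - ⇑g) x‖₊ := by
    filter_upwards [coeFn_compPe μ ε f, coeFn_compPe μ ε g] with x hf hg
    rw [Pi.sub_apply, Pi.sub_apply, hf, hg, ← nndist_eq_nnnorm, ← nndist_eq_nnnorm]
    exact (Pe_lipschitzWith ε).nndist_le (f x) (g x)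
  rw [Lp.edist_def, Lp.edist_def, ENNReal.coe_mul, ENNReal.coe_toNNReal
    (ENNReal.rpow_ne_top_of_nonneg (by norm_num) (measure_ne_top μ _))]
  calc eLpNorm (⇑(compPe μ ε f) - ⇑(compPe μ ε g)) 1 μ
      ≤ ‖ε⁻¹‖₊ * eLpNorm (⇑f - ⇑g) 1 μ := eLpNorm_le_nnreal_smul_eLpNorm_of_ae_le_mul hPe 1
    _ ≤ ‖ε⁻¹‖₊ * (eLpNorm (⇑f - ⇑g) 2 μ * μ Set.univ ^ (2⁻¹ : ℝ)) := by
      gcongr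
      refine (eLpNorm_le_eLpNorm_mul_rpow_measure_univ one_le_two
        ((Lp.aestronglyMeasurable f).sub (Lp.aestronglyMeasurable g))).trans_eq ?_
      norm_num
    _ = _ := by ring

theorem ENNReal.le_liminf_add (u v : ℕ → ℝ≥0∞) :
    liminf u atTop + liminf v atTop ≤ liminf (fun n => u n + v n) atTop := by
  simp only [liminf_eq_iSup_iInf_of_nat]
  refine ENNReal.iSup_add_iSup_le fun i j => le_iSup_of_le (max i j) (le_iInf₂ fun k hk => ?_)
  exact add_le_add (iInf₂_le k (le_of_max_le_left hk)) (iInf₂_le k (le_of_max_le_right hk))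

def SeqLowerSemicontinuous {Z : Type*} [TopologicalSpace Z] (f : Z → ℝ≥0∞) : Prop :=
  ∀ (zs : ℕ → Z) (z : Z), Tendsto zs atTop (𝓝 z) → f z ≤ liminf (fun n => f (zs n)) atTop

section SeqLowerSemicontinuous

variable {Z W : Type*} [TopologicalSpace Z] [TopologicalSpace W] {f g : Z → ℝ≥0∞}

lemma Continuous.seqLowerSemicontinuous (hf : Continuous f) : SeqLowerSemicontinuous f :=
  fun _ z hz => ((hf.tendsto z).comp hz).liminf_eq.ge

lemma SeqLowerSemicontinuous.comp {f : W → ℝ≥0∞} (hf : SeqLowerSemicontinuous f) {h : Z → W}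
    (hh : Continuous h) : SeqLowerSemicontinuous (fun z => f (h z)) :=
  fun _ z hz => hf _ (h z) ((hh.tendsto z).comp hz)

lemma SeqLowerSemicontinuous.add (hf : SeqLowerSemicontinuous f)
    (hg : SeqLowerSemicontinuous g) : SeqLowerSemicontinuous (fun z => f z + g z) :=
  fun zs z hz => (add_le_add (hf zs z hz) (hg zs z hz)).trans (ENNReal.le_liminf_add _ _)

lemma SeqLowerSemicontinuous.const_mul (hf : SeqLowerSemicontinuous f) (C : ℝ≥0∞) :
    SeqLowerSemicontinuous (fun z => C * f z) := fun zs z hz =>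
  calc C * f z ≤ liminf (fun _ => C) atTop * liminf (fun n => f (zs n)) atTop := by
        rw [liminf_const]; exact mul_le_mul_right (hf zs z hz) C
    _ ≤ _ := ENNReal.le_liminf_mul

end SeqLowerSemicontinuous

section Hilbert

variable {H : Type*} [NormedAddCommGroup H] [InnerProductSpace ℝ H]

lemma exists_mem_forall_norm_sq_add_norm_sub_sq_le {K : Set H} (hne : K.Nonempty)
    (hK : IsComplete K) (hconv : Convex ℝ K) :
    ∃ p ∈ K, ∀ w ∈ K, ‖p‖ ^ 2 + ‖w - p‖ ^ 2 ≤ ‖w‖ ^ 2 := by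
  obtain ⟨p, hpK, hp⟩ := exists_norm_eq_iInf_of_complete_convex hne hK hconv 0
  refine ⟨p, hpK, fun w hw => ?_⟩
  have hobtuse := (norm_eq_iInf_iff_real_inner_le_zero hconv hpK).1 hp w hw
  rw [zero_sub, inner_neg_left, neg_nonpos] at hobtuse
  have hexpand : ‖w‖ ^ 2 = ‖p‖ ^ 2 + 2 * inner ℝ p (w - p) + ‖w - p‖ ^ 2 := by
    rw [← norm_add_sq_real, add_sub_cancel]
  linarith

lemma cauchySeq_of_dist_sq_le_sub {E : Type*} [PseudoMetricSpace E] {p : ℕ → E} {a : ℕ → ℝ}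
    (ha : BddAbove (Set.range a)) (h : ∀ k l, k ≤ l → dist (p k) (p l) ^ 2 ≤ a l - a k) :
    CauchySeq p := by
  have hmono : Monotone a := fun k l hkl => by nlinarith [h k l hkl, sq_nonneg (dist (p k) (p l))]
  have hlim := tendsto_atTop_ciSup hmono ha
  refine Metric.cauchySeq_iff'.2 fun δ hδ => ?_
  obtain ⟨N, hN⟩ := eventually_atTop.1
    (hlim.eventually_const_lt (sub_lt_self (⨆ k, a k) (pow_pos hδ 2)))
  refine ⟨N, fun n hn => lt_of_pow_lt_pow_left₀ 2 hδ.le ?_⟩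
  rw [dist_comm]
  linarith [h N n hn, le_ciSup ha n, hN N le_rfl]

theorem nonempty_iInter_of_antitone_convex [CompleteSpace H] {C : ℕ → Set H} (hanti : Antitone C)
    (hconv : ∀ k, Convex ℝ (C k)) (hclosed : ∀ k, IsClosed (C k)) (hne : ∀ k, (C k).Nonempty)
    (hbdd : Bornology.IsBounded (C 0)) : (⋂ k, C k).Nonempty := by
  choose p hpC hp using fun k =>
    exists_mem_forall_norm_sq_add_norm_sub_sq_le (hne k) (hclosed k).isComplete (hconv k)
  obtain ⟨r, hr⟩ := hbdd.exists_norm_le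
  have hcauchy : CauchySeq p := by
    refine cauchySeq_of_dist_sq_le_sub (a := fun k => ‖p k‖ ^ 2) ⟨r ^ 2, ?_⟩ fun k l hkl => ?_
    · rintro _ ⟨k, rfl⟩
      exact pow_le_pow_left₀ (norm_nonneg _) (hr _ (hanti (Nat.zero_le k) (hpC k))) 2
    · rw [dist_comm, dist_eq_norm]
      linarith [hp k (p l) (hanti hkl (hpC l))]
  obtain ⟨q, hq⟩ := cauchySeq_tendsto_of_complete hcauchy
  exact ⟨q, Set.mem_iInter.2 fun k => (hclosed k).mem_of_tendsto hq
    (eventually_atTop.2 ⟨k, fun l hl => hanti hl (hpC l)⟩)⟩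

variable [CompleteSpace H] {E : Type*} [NormedAddCommGroup E] [NormedSpace ℝ E]

theorem exists_apply_eq_norm_sub_le_of_tendsto (T : H →L[ℝ] E) {φs : ℕ → H} {φ₀ : H} {g : E}
    {c : ℝ} (hT : Tendsto (fun n => T (φs n)) atTop (𝓝 g))
    (hc : Tendsto (fun n => ‖φs n - φ₀‖) atTop (𝓝 c)) :
    ∃ φ, T φ = g ∧ ‖φ - φ₀‖ ≤ c := by
  set δ : ℕ → ℝ := fun k => 1 / ((k : ℝ) + 1)
  have hδ : Tendsto δ atTop (𝓝 0) := tendsto_one_div_add_atTop_nhds_zero_nat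
  have hδpos (k : ℕ) : 0 < δ k := Nat.one_div_pos_of_nat
  have hδanti : Antitone δ := fun k l hkl => Nat.one_div_le_one_div hkl
  obtain ⟨φ, hφ⟩ : (⋂ k, T ⁻¹' closedBall g (δ k) ∩ closedBall φ₀ (c + δ k)).Nonempty := by
    refine nonempty_iInter_of_antitone_convex (fun k l hkl => ?_) (fun k => ?_) (fun k => ?_)
      (fun k => ?_) (isBounded_closedBall.subset Set.inter_subset_right)
    · exact Set.inter_subset_inter (Set.preimage_mono (closedBall_subset_closedBall (hδanti hkl)))
        (closedBall_subset_closedBall (by linarith [hδanti hkl]))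
    · exact ((convex_closedBall g _).linear_preimage T.toLinearMap).inter (convex_closedBall _ _)
    · exact (isClosed_closedBall.preimage T.continuous).inter isClosed_closedBall
    · obtain ⟨n, hTn, hcn⟩ := ((hT.eventually (closedBall_mem_nhds g (hδpos k))).and
        (hc.eventually (Iic_mem_nhds (lt_add_of_pos_right c (hδpos k))))).exists
      exact ⟨φs n, hTn, mem_closedBall_iff_norm.2 hcn⟩
  rw [Set.mem_iInter] at hφ
  refine ⟨φ, dist_le_zero.1 (ge_of_tendsto' hδ fun k => (hφ k).1), ?_⟩
  exact ge_of_tendsto' (by simpa using tendsto_const_nhds.add hδ)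
    fun k => mem_closedBall_iff_norm.1 (hφ k).2

end Hilbert

section DirectMethod

variable {H : Type*} [NormedAddCommGroup H] [InnerProductSpace ℝ H] [CompleteSpace H]
  {E : Type*} [NormedAddCommGroup E] [NormedSpace ℝ E]
  (T : H →L[ℝ] E) {D : E → ℝ≥0∞} (φ₀ : H)

theorem exists_le_of_tendsto_add_ofReal_mul_norm_sub_sq (hT : IsCompactOperator T)
    (hD : SeqLowerSemicontinuous D) {α : ℝ} (hα : 0 ≤ α) {φs : ℕ → H}
    {r : ℝ} (hr : ∀ᶠ n in atTop, ‖φs n - φ₀‖ ≤ r) {m : ℝ≥0∞}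
    (hm : Tendsto (fun n => D (T (φs n)) + ENNReal.ofReal (α * ‖φs n - φ₀‖ ^ 2)) atTop (𝓝 m)) :
    ∃ φ, D (T φ) + ENNReal.ofReal (α * ‖φ - φ₀‖ ^ 2) ≤ m := by
  obtain ⟨K, hK, hTK⟩ :=
    hT.image_subset_compact_of_bounded (isBounded_closedBall (x := φ₀) (r := r))
  have hfreq : ∃ᶠ n in atTop, (T (φs n), ‖φs n - φ₀‖) ∈ K ×ˢ Set.Icc 0 r := Eventually.frequently <|
    hr.mono fun n hn => ⟨hTK ⟨φs n, mem_closedBall_iff_norm.2 hn, rfl⟩, norm_nonneg _, hn⟩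
  obtain ⟨⟨g, c⟩, -, σ, hσ, hlim⟩ := (hK.prod isCompact_Icc).tendsto_subseq' hfreq
  have hTg : Tendsto (fun k => T (φs (σ k))) atTop (𝓝 g) := (continuous_fst.tendsto _).comp hlim
  have hc : Tendsto (fun k => ‖φs (σ k) - φ₀‖) atTop (𝓝 c) := (continuous_snd.tendsto _).comp hlim
  obtain ⟨φ, rfl, hφ⟩ := exists_apply_eq_norm_sub_le_of_tendsto T hTg hc
  have hpenalty : Tendsto (fun k => ENNReal.ofReal (α * ‖φs (σ k) - φ₀‖ ^ 2)) atTop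
      (𝓝 (ENNReal.ofReal (α * c ^ 2))) :=
    (ENNReal.continuous_ofReal.tendsto _).comp ((hc.pow 2).const_mul α)
  refine ⟨φ, ?_⟩
  calc D (T φ) + ENNReal.ofReal (α * ‖φ - φ₀‖ ^ 2)
      ≤ liminf (fun k => D (T (φs (σ k)))) atTop +
          liminf (fun k => ENNReal.ofReal (α * ‖φs (σ k) - φ₀‖ ^ 2)) atTop := by
        rw [hpenalty.liminf_eq]
        gcongr
        exact hD _ _ hTg
    _ ≤ _ := ENNReal.le_liminf_add _ _
    _ = m := (hm.comp hσ.tendsto_atTop).liminf_eq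

theorem exists_forall_add_ofReal_mul_norm_sub_sq_le (hT : IsCompactOperator T)
    (hD : SeqLowerSemicontinuous D) {α : ℝ} (hα : 0 < α) :
    ∃ φstar, ∀ φ, D (T φstar) + ENNReal.ofReal (α * ‖φstar - φ₀‖ ^ 2) ≤
      D (T φ) + ENNReal.ofReal (α * ‖φ - φ₀‖ ^ 2) := by
  set J : H → ℝ≥0∞ := fun φ => D (T φ) + ENNReal.ofReal (α * ‖φ - φ₀‖ ^ 2)
  suffices ∃ φstar, J φstar ≤ sInf (Set.range J) from
    this.imp fun φstar h φ => h.trans (sInf_le ⟨φ, rfl⟩)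
  obtain ⟨u, -, hu, hmem⟩ := exists_seq_tendsto_sInf (Set.range_nonempty J) (OrderBot.bddBelow _)
  choose φs hφs using hmem
  rcases eq_or_ne (sInf (Set.range J)) ⊤ with htop | hfin
  · exact ⟨φ₀, htop ▸ le_top⟩
  set M := sInf (Set.range J) + 1
  have hM : M ≠ ⊤ := ENNReal.add_ne_top.2 ⟨hfin, ENNReal.one_ne_top⟩
  have hJ : Tendsto (fun n => J (φs n)) atTop (𝓝 (sInf (Set.range J))) := by
    simpa only [hφs] using hu
  have hr : ∀ᶠ n in atTop, ‖φs n - φ₀‖ ≤ √(M.toReal / α) := by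
    filter_upwards [hJ.eventually_le_const (ENNReal.lt_add_right hfin one_ne_zero)] with n hn
    have hpenalty : α * ‖φs n - φ₀‖ ^ 2 ≤ M.toReal :=
      (ENNReal.ofReal_le_iff_le_toReal hM).1 (le_add_self.trans hn)
    exact Real.le_sqrt_of_sq_le ((le_div_iff₀' hα).2 hpenalty)
  exact exists_le_of_tendsto_add_ofReal_mul_norm_sub_sq T φ₀ hT hD hα.le hr hJ

end DirectMethod

theorem stabilized_functional_attains_minimizer_general
    {X : Type*} [MeasurableSpace X] (μ : Measure X) [IsFiniteMeasure μ]
    {H : Type*} [NormedAddCommGroup H] [InnerProductSpace ℝ H] [CompleteSpace H]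
    {Y : Type*} [NormedAddCommGroup Y] [NormedSpace ℝ Y]
    (T : H →L[ℝ] Lp ℝ 2 μ) (hT : IsCompactOperator T)
    (F : Lp ℝ 1 μ → Y) (hF : Continuous F)
    (R : Lp ℝ 1 μ → ENNReal)
    (hR : ∀ (fs : ℕ → Lp ℝ 1 μ) (f : Lp ℝ 1 μ),
      Tendsto fs atTop (𝓝 f) → R f ≤ Filter.liminf (fun n => R (fs n)) atTop)
    (ε α β : ℝ) (hα : 0 < α) (yδ : Y) (φ₀ : H) :
    ∃ φstar : H, ∀ φ : H,
      ENNReal.ofReal (‖F (compPe μ ε (T φstar)) - yδ‖ ^ 2) +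
        ENNReal.ofReal (2 * β * α) * R (compPe μ ε (T φstar)) +
        ENNReal.ofReal (α * ‖φstar - φ₀‖ ^ 2) ≤
      ENNReal.ofReal (‖F (compPe μ ε (T φ)) - yδ‖ ^ 2) +
        ENNReal.ofReal (2 * β * α) * R (compPe μ ε (T φ)) +
        ENNReal.ofReal (α * ‖φ - φ₀‖ ^ 2) := by
  have hPe : Continuous (compPe μ ε) := (lipschitzWith_compPe μ ε).continuous
  have hmisfit : Continuous fun g => ENNReal.ofReal (‖F (compPe μ ε g) - yδ‖ ^ 2) :=
    ENNReal.continuous_ofReal.comp (((hF.comp hPe).sub continuous_const).norm.pow 2)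
  exact exists_forall_add_ofReal_mul_norm_sub_sq_le T φ₀ hT
    (hmisfit.seqLowerSemicontinuous.add ((SeqLowerSemicontinuous.comp hR hPe).const_mul _)) hα

/-- Lemma 4.1 (abstract form): for a finite measure `μ`, a compact continuous linear map
`T : H → L²(μ)` from a real Hilbert space, a continuous map `F : L¹(μ) → Y`, and a
sequentially lower semicontinuous functional `R : L¹(μ) → [0, ∞]` (e.g. the BV seminorm of
the projection), the stabilized functional
`G_{ε,α}(φ) = ‖F(P_ε ∘ (Tφ)) − y^δ‖² + 2βα·R(P_ε ∘ (Tφ)) + α‖φ − φ₀‖²`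
attains a global minimizer on `H` for all `ε, α, β > 0`. -/
theorem stabilized_functional_attains_minimizer
    {X : Type*} [MeasurableSpace X] (μ : Measure X) [IsFiniteMeasure μ]
    {H : Type*} [NormedAddCommGroup H] [InnerProductSpace ℝ H] [CompleteSpace H]
    {Y : Type*} [NormedAddCommGroup Y] [NormedSpace ℝ Y]
    (T : H →L[ℝ] Lp ℝ 2 μ) (hT : IsCompactOperator T)
    (F : Lp ℝ 1 μ → Y) (hF : Continuous F)
    (R : Lp ℝ 1 μ → ENNReal)
    (hR : ∀ (fs : ℕ → Lp ℝ 1 μ) (f : Lp ℝ 1 μ),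
      Tendsto fs atTop (𝓝 f) → R f ≤ Filter.liminf (fun n => R (fs n)) atTop)
    (ε α β : ℝ) (hε : 0 < ε) (hα : 0 < α) (hβ : 0 < β) (yδ : Y) (φ₀ : H) :
    ∃ φstar : H, ∀ φ : H,
      ENNReal.ofReal (‖F (compPe μ ε (T φstar)) - yδ‖ ^ 2) +
        ENNReal.ofReal (2 * β * α) * R (compPe μ ε (T φstar)) +
        ENNReal.ofReal (α * ‖φstar - φ₀‖ ^ 2) ≤
      ENNReal.ofReal (‖F (compPe μ ε (T φ)) - yδ‖ ^ 2) +
        ENNReal.ofReal (2 * β * α) * R (compPe μ ε (T φ)) +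
        ENNReal.ofReal (α * ‖φ - φ₀‖ ^ 2) :=
  stabilized_functional_attains_minimizer_general μ T hT F hF R hR ε α β hα yδ φ₀
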